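/- arXiv:2412.04047 — 2 statements merged into one kernel-verified Lean document; each statement's English description precedes it below -/
import Mathlib

section
/- Let 0 < q < 1 and λ > 0. Define θ_{q,λ} = (2λ(1−q))^{1/(2−q)} and t_{q,λ} = θ_{q,λ} + λq·θ_{q,λ}^{q−1}. Then for every z ∈ ℝ with |z| < t_{q,λ}, the unique minimizer over θ ∈ ℝ of f(θ) = (1/2)(z − θ)² + λ|θ|^q is θ = 0. -/
/-- Bernoulli-type inequality for negative exponents, via weighted AM-GM. -/
lemma bern_neg {x p : ℝ} (hx : 0 < x) (hp : 0 < p) : 1 + p ≤ p * x + x ^ (-p) := by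
  have h1p : 0 < 1 + p := by linarith
  have h := Real.geom_mean_le_arith_mean2_weighted
    (w₁ := p / (1 + p)) (w₂ := 1 / (1 + p)) (p₁ := x) (p₂ := x ^ (-p))
    (by positivity) (by positivity) hx.le (Real.rpow_nonneg hx.le _)
    (by field_simp; ring)
  have hgm : x ^ (p / (1 + p)) * (x ^ (-p)) ^ (1 / (1 + p)) = 1 := by
    rw [← Real.rpow_mul hx.le, ← Real.rpow_add hx,
      show p / (1 + p) + -p * (1 / (1 + p)) = 0 by field_simp; ring]
    exact Real.rpow_zero x
  rw [hgm] at h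
  have := mul_le_mul_of_nonneg_right h h1p.le
  calc 1 + p = 1 * (1 + p) := by ring
    _ ≤ (p / (1 + p) * x + 1 / (1 + p) * x ^ (-p)) * (1 + p) := this
    _ = p * x + x ^ (-p) := by field_simp

/-- Below the threshold t_{q,λ}, the unique minimizer of the ℓ^q proximal problem is 0. -/
theorem stmt_2 (q lam z : ℝ) (hq0 : 0 < q) (hq1 : q < 1) (hlam : 0 < lam)
    (hz : |z| < (2 * lam * (1 - q)) ^ (1 / (2 - q)) +
        lam * q * ((2 * lam * (1 - q)) ^ (1 / (2 - q))) ^ (q - 1)) :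
    let f : ℝ → ℝ := fun θ => (1/2) * (z - θ)^2 + lam * |θ| ^ q
    (∀ θ : ℝ, f 0 ≤ f θ) ∧ (∀ θ : ℝ, (∀ t : ℝ, f θ ≤ f t) → θ = 0) := by
  intro f
  have h2q : (0:ℝ) < 2 - q := by linarith
  have h1q : (0:ℝ) < 1 - q := by linarith
  have hA : (0:ℝ) < 2 * lam * (1 - q) := by positivity
  set A := 2 * lam * (1 - q) with hAdef
  set T := A ^ (1 / (2 - q)) with hTdef
  have hT : 0 < T := Real.rpow_pos_of_pos hA _
  have hTpow : T ^ (2 - q) = A := by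
    rw [hTdef, ← Real.rpow_mul hA.le, one_div, inv_mul_cancel₀ h2q.ne', Real.rpow_one]
  -- lam * T^(q-1) = T / (2*(1-q))
  have hlamT : lam * T ^ (q - 1) = T / (2 * (1 - q)) := by
    have h1 : T ^ (q - 1) * T ^ (2 - q) = T := by
      rw [← Real.rpow_add hT]; norm_num
    have h2 : T ^ (q - 1) = T / A := by
      field_simp [← hTpow]
      rw [← hTpow]; linarith [h1]
    rw [h2, hAdef]
    field_simp
  set t := T + lam * q * T ^ (q - 1) with htdef
  have ht_eq : t = T * (2 - q) / (2 * (1 - q)) := by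
    rw [htdef, show lam * q * T ^ (q-1) = q * (lam * T ^ (q-1)) by ring, hlamT]
    field_simp; ring
  -- key: for r > 0, t ≤ r/2 + lam * r^(q-1)
  have key1 : ∀ r : ℝ, 0 < r → t ≤ r / 2 + lam * r ^ (q - 1) := by
    intro r hr
    have hb := bern_neg (x := r / T) (p := 1 - q) (by positivity) h1q
    have hrT : (r / T) ^ (-(1 - q)) = r ^ (q - 1) / T ^ (q - 1) := by
      rw [show -(1-q) = q - 1 by ring, Real.div_rpow hr.le hT.le]
    rw [hrT] at hb
    have hTq : 0 < T ^ (q - 1) := Real.rpow_pos_of_pos hT _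
    have h3 : lam * T ^ (q - 1) * (1 + (1 - q)) ≤
        lam * T ^ (q - 1) * ((1 - q) * (r / T) + r ^ (q - 1) / T ^ (q - 1)) := by
      apply mul_le_mul_of_nonneg_left hb (by positivity)
    rw [hlamT] at h3
    have hTrw : T / (2 * (1 - q)) * ((1 - q) * (r / T) + r ^ (q - 1) / T ^ (q - 1)) =
        r / 2 + (T / (2 * (1 - q)) / T ^ (q - 1)) * r ^ (q - 1) := by
      field_simp
    have hcoef : T / (2 * (1 - q)) / T ^ (q - 1) = lam := by
      rw [← hlamT]; field_simp
    rw [hTrw, hcoef] at h3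
    rw [ht_eq]
    calc T * (2 - q) / (2 * (1 - q)) = T / (2 * (1 - q)) * (1 + (1 - q)) := by
          rw [show (1:ℝ) + (1 - q) = 2 - q by ring]; ring
      _ ≤ r / 2 + lam * r ^ (q - 1) := h3
  -- strict: for θ ≠ 0, f 0 < f θ
  have key : ∀ θ : ℝ, θ ≠ 0 → f 0 < f θ := by
    intro θ hθ
    have hr : 0 < |θ| := abs_pos.mpr hθ
    have h0 : f 0 = 1/2 * z^2 := by
      simp [f, Real.zero_rpow hq0.ne']
    have hk := key1 _ hr
    have hmul := mul_lt_mul_of_pos_right (lt_of_lt_of_le hz hk) hr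
    -- |z| * |θ| < (|θ|/2 + lam*|θ|^(q-1)) * |θ|
    have hrq : |θ| ^ (q - 1) * |θ| = |θ| ^ q := by
      nth_rewrite 2 [← Real.rpow_one |θ|]
      rw [← Real.rpow_add hr]; norm_num
    have hexp : (|θ| / 2 + lam * |θ| ^ (q - 1)) * |θ| = 1/2 * θ^2 + lam * |θ| ^ q := by
      have h2 : |θ| * |θ| = θ^2 := by rw [← sq_abs]; ring
      calc (|θ| / 2 + lam * |θ| ^ (q - 1)) * |θ|
          = 1/2 * (|θ| * |θ|) + lam * (|θ| ^ (q - 1) * |θ|) := by ring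
        _ = 1/2 * θ^2 + lam * |θ| ^ q := by rw [h2, hrq]
    rw [hexp] at hmul
    have hzθ : z * θ ≤ |z| * |θ| := by
      calc z * θ ≤ |z * θ| := le_abs_self _
        _ = |z| * |θ| := abs_mul z θ
    rw [h0]
    show 1/2 * z^2 < 1/2 * (z - θ)^2 + lam * |θ| ^ q
    nlinarith [hmul, hzθ]
  constructor
  · intro θ
    by_cases h : θ = 0
    · rw [h]
    · exact (key θ h).le
  · intro θ hθmin
    by_contra h
    exact absurd (hθmin 0) (not_le.mpr (key θ h))
end

section
/- Let 0 < q < 1, λ > 0, and |z| > t_{q,λ} where t_{q,λ} = θ_{q,λ} + λq·θ_{q,λ}^{q−1} with θ_{q,λ} = (2λ(1−q))^{1/(2−q)}. Then the equation θ + λq·θ^{q−1} = |z| has a unique solution θ* in the open interval (θ_{q,λ}, |z|). -/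
/-- Above the threshold, the stationarity equation has a unique root in (θ_{q,λ}, |z|). -/
theorem stmt_3 (q lam z : ℝ) (hq0 : 0 < q) (hq1 : q < 1) (hlam : 0 < lam)
    (hz : (2 * lam * (1 - q)) ^ (1 / (2 - q)) +
        lam * q * ((2 * lam * (1 - q)) ^ (1 / (2 - q))) ^ (q - 1) < |z|) :
    ∃! θ : ℝ, θ ∈ Set.Ioo ((2 * lam * (1 - q)) ^ (1 / (2 - q))) |z| ∧
      θ + lam * q * θ ^ (q - 1) = |z| := by
  set θ₀ : ℝ := (2 * lam * (1 - q)) ^ (1 / (2 - q)) with hθ₀def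
  have hb : 0 < 2 * lam * (1 - q) := by
    have : 0 < 1 - q := by linarith
    positivity
  have hθ₀pos : 0 < θ₀ := Real.rpow_pos_of_pos hb _
  have h2q : (2 : ℝ) - q ≠ 0 := by intro h; linarith [h]
  have key : θ₀ ^ ((2:ℝ) - q) = 2 * lam * (1 - q) := by
    rw [hθ₀def, ← Real.rpow_mul hb.le, one_div, inv_mul_cancel₀ h2q, Real.rpow_one]
  set f : ℝ → ℝ := fun θ => θ + lam * q * θ ^ (q - 1) with hf
  have hlb : f θ₀ < |z| := hz
  have hθ₀q1 : 0 < lam * q * θ₀ ^ (q - 1) := by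
    have := Real.rpow_pos_of_pos hθ₀pos (q - 1); positivity
  have hθ₀z : θ₀ < |z| := by
    have : θ₀ < f θ₀ := by simp only [hf]; linarith
    linarith
  have hcont : ContinuousOn f (Set.Icc θ₀ |z|) := by
    intro x hx
    have hx0 : x ≠ 0 := ne_of_gt (lt_of_lt_of_le hθ₀pos hx.1)
    exact (continuousAt_id.add
      ((Real.continuousAt_rpow_const x (q - 1) (Or.inl hx0)).const_mul
        (lam * q))).continuousWithinAt
  have hmono : StrictMonoOn f (Set.Icc θ₀ |z|) := by
    apply strictMonoOn_of_deriv_pos (convex_Icc _ _) hcont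
    intro x hx
    rw [interior_Icc] at hx
    have hx0 : 0 < x := hθ₀pos.trans hx.1
    have hd : HasDerivAt f (1 + lam * q * ((q - 1) * x ^ (q - 1 - 1))) x := by
      have h2 := Real.hasDerivAt_rpow_const (p := q - 1) (Or.inl hx0.ne')
      exact (hasDerivAt_id x).add (h2.const_mul (lam * q))
    rw [hd.deriv]
    have hq2 : q - 1 - 1 = q - 2 := by ring
    rw [hq2]
    have hxq : x ^ ((q:ℝ) - 2) < θ₀ ^ ((q:ℝ) - 2) :=
      Real.rpow_lt_rpow_of_neg hθ₀pos hx.1 (by linarith)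
    have hθ₀q : θ₀ ^ ((q:ℝ) - 2) = (2 * lam * (1 - q))⁻¹ := by
      rw [show (q:ℝ) - 2 = -(2 - q) by ring, Real.rpow_neg hθ₀pos.le, key]
    have hxqpos : 0 < x ^ ((q:ℝ) - 2) := Real.rpow_pos_of_pos hx0 _
    have hlt : lam * q * (1 - q) * x ^ ((q:ℝ) - 2)
        < lam * q * (1 - q) * θ₀ ^ ((q:ℝ) - 2) := by
      apply mul_lt_mul_of_pos_left hxq
      have : 0 < 1 - q := by linarith
      positivity
    have heq : lam * q * (1 - q) * θ₀ ^ ((q:ℝ) - 2) = q / 2 := by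
      have h1q : (1:ℝ) - q ≠ 0 := (by intro h; linarith)
      rw [hθ₀q]; field_simp
    nlinarith
  obtain ⟨θ, hθmem, hθeq⟩ : |z| ∈ f '' Set.Ioo θ₀ |z| := by
    apply intermediate_value_Ioo hθ₀z.le hcont
    constructor
    · exact hlb
    · have hzpos : 0 < |z| := hθ₀pos.trans hθ₀z
      have : 0 < lam * q * |z| ^ (q - 1) := by
        have := Real.rpow_pos_of_pos hzpos (q - 1); positivity
      simp only [hf]; linarith
  refine ⟨θ, ⟨hθmem, hθeq⟩, ?_⟩
  rintro y ⟨hy, hyeq⟩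
  exact hmono.injOn (Set.Ioo_subset_Icc_self hy) (Set.Ioo_subset_Icc_self hθmem)
    (by rw [show f y = y + lam * q * y ^ (q-1) from rfl, hyeq, ← hθeq])
end
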